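/- arXiv:0911.2161 — 2 statements merged into one kernel-verified Lean document; each statement's English description precedes it below -/
import Mathlib

section
/- If A is a random symplectic matrix (A^T J A = J with J the standard symplectic form on ℝ^d, d even), then the operators L_q (built from A) and L_q^{-T} (built from A^{-T}) are conjugate via the map (𝒥v)(ê) = v(Jê): 𝒥 L_q = L_q^{-T} 𝒥. Consequently they have the same spectrum. -/
open MeasureTheory ProbabilityTheory Matrix

instance matrixMeasurableSpace {d : ℕ} : MeasurableSpace (Matrix (Fin d) (Fin d) ℝ) :=
  inferInstanceAs (MeasurableSpace (Fin d → Fin d → ℝ))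

noncomputable section

/-- A matrix acting on Euclidean space. -/
def matApp {d : ℕ} (A : Matrix (Fin d) (Fin d) ℝ) (x : EuclideanSpace ℝ (Fin d)) :
    EuclideanSpace ℝ (Fin d) :=
  Matrix.toEuclideanLin A x

/-- The transfer operator `(L_q v)(e) = E[‖Ae‖^q v(Ae/‖Ae‖)]`. -/
def transferOp {Ω : Type*} [MeasurableSpace Ω] (μ : Measure Ω) {d : ℕ}
    (A : Ω → Matrix (Fin d) (Fin d) ℝ) (q : ℝ)
    (v : EuclideanSpace ℝ (Fin d) → ℝ) (e : EuclideanSpace ℝ (Fin d)) : ℝ :=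
  ∫ ω, ‖matApp (A ω) e‖ ^ q * v (‖matApp (A ω) e‖⁻¹ • matApp (A ω) e) ∂μ

lemma matApp_mul {d : ℕ} (A B : Matrix (Fin d) (Fin d) ℝ) (x : EuclideanSpace ℝ (Fin d)) :
    matApp (A * B) x = matApp A (matApp B x) := by
  simp [matApp, Matrix.toEuclideanLin_apply, Matrix.mulVec_mulVec]

lemma matApp_one {d : ℕ} (x : EuclideanSpace ℝ (Fin d)) : matApp 1 x = x := by
  simp [matApp, Matrix.toEuclideanLin_apply]

lemma matApp_smul {d : ℕ} (A : Matrix (Fin d) (Fin d) ℝ) (c : ℝ) (x : EuclideanSpace ℝ (Fin d)) :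
    matApp A (c • x) = c • matApp A x := by
  simp [matApp]

lemma orth_of_iso {d : ℕ} (J : Matrix (Fin d) (Fin d) ℝ)
    (hJiso : ∀ x : EuclideanSpace ℝ (Fin d), ‖matApp J x‖ = ‖x‖) :
    Jᵀ * J = 1 := by
  set T := Matrix.toEuclideanLin J with hT
  let f : EuclideanSpace ℝ (Fin d) →ₗᵢ[ℝ] EuclideanSpace ℝ (Fin d) := ⟨T, hJiso⟩
  apply Matrix.toEuclideanLin.injective
  have hmul : Matrix.toEuclideanLin (Jᵀ * J) = Matrix.toEuclideanLin Jᵀ ∘ₗ T := by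
    ext x
    simp [Matrix.toEuclideanLin_apply, Matrix.mulVec_mulVec, hT]
  rw [hmul]
  have hct : Jᵀ = Jᴴ := (Matrix.conjTranspose_eq_transpose_of_trivial J).symm
  rw [hct, Matrix.toEuclideanLin_conjTranspose_eq_adjoint]
  have h1 : Matrix.toEuclideanLin (1 : Matrix (Fin d) (Fin d) ℝ) = LinearMap.id := by
    refine LinearMap.ext fun x => ?_
    simp [Matrix.toEuclideanLin_apply]
  rw [h1]
  refine LinearMap.ext fun x => ?_
  refine ext_inner_right ℝ fun y => ?_
  rw [LinearMap.comp_apply, LinearMap.adjoint_inner_left, LinearMap.id_apply]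
  exact f.inner_map_map x y

lemma symp_key {d : ℕ} (J B : Matrix (Fin d) (Fin d) ℝ)
    (hJunit : IsUnit J) (hJo : Jᵀ * J = 1)
    (hs : Bᵀ * J * B = J) : B * J = J * (Bᵀ)⁻¹ := by
  have hJdet : IsUnit J.det := (Matrix.isUnit_iff_isUnit_det _).mp hJunit
  have hJi : J⁻¹ = Jᵀ := Matrix.inv_eq_left_inv hJo
  have hsT : Bᵀ * Jᵀ * B = Jᵀ := by
    calc Bᵀ * Jᵀ * B = (Bᵀ * J * B)ᵀ := by
          simp [Matrix.transpose_mul, mul_assoc]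
      _ = Jᵀ := by rw [hs]
  have hr : (Bᵀ)⁻¹ = J⁻¹ * B * J := by
    apply Matrix.inv_eq_right_inv
    rw [hJi]
    calc Bᵀ * (Jᵀ * B * J) = (Bᵀ * Jᵀ * B) * J := by
          simp only [mul_assoc]
      _ = Jᵀ * J := by rw [hsT]
      _ = 1 := hJo
  rw [hr, ← mul_assoc, ← mul_assoc, Matrix.mul_nonsing_inv _ hJdet, one_mul]

/-- If `A` is a random symplectic matrix (`AᵀJA = J` with `J` the standard
symplectic form, `J` orthogonal, `d` even), then `L_q` (built from `A`) and `L_q^{-T}` (built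
from `A⁻ᵀ`) are conjugate via `(𝒥v)(e) = v(Je)`: namely `𝒥 L_q = L_q^{-T} 𝒥`.  Consequently
they have the same (point) spectrum on the sphere. -/
theorem transferOp_symplectic_conjugation
    {Ω : Type*} [MeasurableSpace Ω] (μ : Measure Ω) [IsProbabilityMeasure μ]
    {d : ℕ} (hd : Even d)
    (J : Matrix (Fin d) (Fin d) ℝ)
    (hJunit : IsUnit J)
    (hJiso : ∀ x : EuclideanSpace ℝ (Fin d), ‖matApp J x‖ = ‖x‖)
    (A : Ω → Matrix (Fin d) (Fin d) ℝ)
    (hmeasA : Measurable A)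
    (hinv : ∀ ω, IsUnit (A ω))
    (hsymp : ∀ ω, (A ω)ᵀ * J * (A ω) = J)
    (q : ℝ) :
    (∀ (v : EuclideanSpace ℝ (Fin d) → ℝ) (e : EuclideanSpace ℝ (Fin d)),
        transferOp μ A q v (matApp J e) =
          transferOp μ (fun ω => ((A ω)ᵀ)⁻¹) q (fun x => v (matApp J x)) e) ∧
    (∀ lam : ℝ,
        (∃ v : EuclideanSpace ℝ (Fin d) → ℝ,
            (∃ e, ‖e‖ = 1 ∧ v e ≠ 0) ∧
            ∀ e, ‖e‖ = 1 → transferOp μ A q v e = lam * v e) ↔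
        (∃ v : EuclideanSpace ℝ (Fin d) → ℝ,
            (∃ e, ‖e‖ = 1 ∧ v e ≠ 0) ∧
            ∀ e, ‖e‖ = 1 →
              transferOp μ (fun ω => ((A ω)ᵀ)⁻¹) q v e = lam * v e)) := by
  have hJdet : IsUnit J.det := (Matrix.isUnit_iff_isUnit_det _).mp hJunit
  have hJo : Jᵀ * J = 1 := orth_of_iso J hJiso
  have hJJi : ∀ x, matApp J (matApp J⁻¹ x) = x := fun x => by
    rw [← matApp_mul, Matrix.mul_nonsing_inv _ hJdet, matApp_one]
  have hJiJ : ∀ x, matApp J⁻¹ (matApp J x) = x := fun x => by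
    rw [← matApp_mul, Matrix.nonsing_inv_mul _ hJdet, matApp_one]
  have part1 : ∀ (v : EuclideanSpace ℝ (Fin d) → ℝ) (e : EuclideanSpace ℝ (Fin d)),
      transferOp μ A q v (matApp J e) =
        transferOp μ (fun ω => ((A ω)ᵀ)⁻¹) q (fun x => v (matApp J x)) e := by
    intro v e
    unfold transferOp
    congr 1
    funext ω
    have hkey : A ω * J = J * ((A ω)ᵀ)⁻¹ := symp_key J (A ω) hJunit hJo (hsymp ω)
    have hvec : matApp (A ω) (matApp J e) = matApp J (matApp ((A ω)ᵀ)⁻¹ e) := by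
      rw [← matApp_mul, hkey, matApp_mul]
    set w := matApp ((A ω)ᵀ)⁻¹ e with hw
    rw [hvec, hJiso w, ← matApp_smul]
  refine ⟨part1, fun lam => ?_⟩
  constructor
  · rintro ⟨v, ⟨e₀, he₀, hv0⟩, hev⟩
    refine ⟨fun x => v (matApp J x), ⟨matApp J⁻¹ e₀, ?_, ?_⟩, ?_⟩
    · rw [← hJiso (matApp J⁻¹ e₀), hJJi]; exact he₀
    · show v (matApp J (matApp J⁻¹ e₀)) ≠ 0
      rw [hJJi]; exact hv0
    · intro e he
      rw [← part1 v e, hev (matApp J e) (by rw [hJiso]; exact he)]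
  · rintro ⟨v, ⟨e₀, he₀, hv0⟩, hev⟩
    refine ⟨fun x => v (matApp J⁻¹ x), ⟨matApp J e₀, ?_, ?_⟩, ?_⟩
    · rw [hJiso]; exact he₀
    · show v (matApp J⁻¹ (matApp J e₀)) ≠ 0
      rw [hJiJ]; exact hv0
    · intro u hu
      have heu : matApp J (matApp J⁻¹ u) = u := hJJi u
      have hne : ‖matApp J⁻¹ u‖ = 1 := by rw [← hJiso (matApp J⁻¹ u), heu]; exact hu
      have h1 := part1 (fun x => v (matApp J⁻¹ x)) (matApp J⁻¹ u)
      rw [heu] at h1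
      rw [h1]
      have hfun : (fun x => v (matApp J⁻¹ (matApp J x))) = v := funext fun x => by rw [hJiJ]
      rw [hfun, hev _ hne]

end
end

section
/- In the scalar case d=1, where E‖X_N‖^q = e^{Nℓ(q)} exactly, the second moment of the RMC estimator evaluates in closed form to E'(Z_N²) = K^{-N}(e^{ℓ(2q)} + (K-1)e^{2ℓ(q)})^N, and hence var Z_N = K^{-N}(e^{2ℓ(q)}(K + γ_q))^N − e^{2Nℓ(q)} with γ_q = e^{ℓ(2q)-2ℓ(q)} − 1. In particular var Z_N / (E' Z_N)² = (1 + γ_q/K)^N − 1 ∼ Nγ_q/K as K → ∞ with N fixed. -/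
/-!
Write `X (n, k) = |A n k|^q`. For two index paths `j, j'` the product of their path products is
`∏ₚ X p ^ c p`, where `c p ∈ {0, 1, 2}` counts how many of the two paths pass through the site
`p`. Independence of the `X p` splits its expectation over sites, and identical distribution
turns it into `∏ₙ (e^{ℓ(2q)} if j n = j' n else e^{2ℓ(q)})`. Summed over all pairs of paths
this factorises over the `N` positions, giving `(K e^{ℓ(2q)} + K (K - 1) e^{2ℓ(q)})^N`.
-/

open MeasureTheory ProbabilityTheory Filter Finset

def pairVisits {ι κ : Type*} [DecidableEq κ] (j j' : ι → κ) (p : ι × κ) : ℕ :=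
  (if j p.1 = p.2 then 1 else 0) + (if j' p.1 = p.2 then 1 else 0)

section Paths

variable {ι κ M : Type*} [Fintype ι] [Fintype κ] [DecidableEq κ] [CommMonoid M]

lemma prod_path_eq_prod_pow_boole (x : ι × κ → M) (j : ι → κ) :
    ∏ n, x (n, j n) = ∏ p : ι × κ, x p ^ (if j p.1 = p.2 then 1 else 0) := by
  simp [Fintype.prod_prod_type]

lemma prod_path_mul_prod_path (x : ι × κ → M) (j j' : ι → κ) :
    (∏ n, x (n, j n)) * ∏ n, x (n, j' n) = ∏ p, x p ^ pairVisits j j' p := by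
  simp only [prod_path_eq_prod_pow_boole x, ← prod_mul_distrib, ← pow_add, pairVisits]

lemma prod_comp_pairVisits (m : ℕ → M) (h0 : m 0 = 1) (j j' : ι → κ) :
    ∏ p, m (pairVisits j j' p) = ∏ n, if j n = j' n then m 2 else m 1 * m 1 := by
  rw [Fintype.prod_prod_type]
  refine prod_congr rfl fun n _ => ?_
  split_ifs with h
  · rw [Fintype.prod_eq_single (j n) fun k hk => ?_]
    · simp [pairVisits, h]
    · simp [pairVisits, ← h, Ne.symm hk, h0]
  · rw [Fintype.prod_eq_mul (j n) (j' n) h fun k hk => ?_]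
    · simp [pairVisits, h, Ne.symm h]
    · simp [pairVisits, Ne.symm hk.1, Ne.symm hk.2, h0]

end Paths

lemma sum_sum_prod_eq_pow {ι κ R : Type*} [Fintype ι] [DecidableEq ι] [Fintype κ]
    [CommSemiring R] (g : κ → κ → R) :
    ∑ j : ι → κ, ∑ j' : ι → κ, ∏ n, g (j n) (j' n) =
      (∑ k, ∑ k', g k k') ^ Fintype.card ι := by
  calc ∑ j : ι → κ, ∑ j' : ι → κ, ∏ n, g (j n) (j' n)
      = ∑ j : ι → κ, ∏ n, ∑ k', g (j n) k' :=
        sum_congr rfl fun j _ => (Fintype.prod_sum fun n k' => g (j n) k').symm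
    _ = ∏ _n : ι, ∑ k, ∑ k', g k k' := (Fintype.prod_sum fun _ k => ∑ k', g k k').symm
    _ = _ := by rw [prod_const, card_univ]

lemma sum_sum_ite_eq {κ R : Type*} [Fintype κ] [DecidableEq κ] [CommRing R] (a b : R) :
    ∑ k : κ, ∑ k' : κ, (if k = k' then a else b) =
      Fintype.card κ * (a + (Fintype.card κ - 1) * b) := by
  have hsplit : ∀ k k' : κ, (if k = k' then a else b) = b + if k = k' then a - b else 0 := by
    intro k k'; split_ifs <;> ring
  simp only [hsplit, sum_add_distrib, sum_ite_eq, mem_univ, if_true, sum_const, card_univ,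
    nsmul_eq_mul]
  ring

/-- `K ((1 + γ / K)^N - 1)` is the difference quotient of `x ↦ (1 + x γ)^N` at `0` with step
`1 / K`. -/
lemma tendsto_natCast_mul_one_add_div_pow_sub_one (N : ℕ) (γ : ℝ) :
    Tendsto (fun K : ℕ => (K : ℝ) * ((1 + γ / K) ^ N - 1)) atTop (nhds (N * γ)) := by
  have hderiv : HasDerivAt (fun x : ℝ => (1 + x * γ) ^ N) (N * γ) 0 := by
    simpa using (((hasDerivAt_id (0 : ℝ)).mul_const γ).const_add 1).fun_pow N
  refine (hderiv.tendsto_slope_zero_right.comp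
    (tendsto_inv_atTop_nhdsGT_zero.comp tendsto_natCast_atTop_atTop)).congr fun K => ?_
  simp [div_eq_mul_inv, mul_comm]

section Independence

variable {Ω : Type*} [MeasurableSpace Ω] {μ : Measure Ω}

lemma ProbabilityTheory.iIndepFun.integrable_finsetProd {ι : Type*} {X : ι → Ω → ℝ}
    (hX : iIndepFun X μ) (hint : ∀ i, Integrable (X i) μ) (s : Finset ι) :
    Integrable (fun ω => ∏ i ∈ s, X i ω) μ := by
  classical
  induction s using Finset.induction_on with
  | empty =>
    have := hX.isProbabilityMeasure
    simp
  | insert i s hi ih =>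
    have hindep := hX.indepFun_finsetProd_of_notMem₀ (fun i => (hint i).aemeasurable) hi
    rw [← prod_fn] at ih ⊢
    rw [prod_insert hi, mul_comm]
    exact hindep.integrable_mul ih (hint i)

variable {ι κ : Type*} [Fintype ι] [Fintype κ] [DecidableEq κ] {X : ι × κ → Ω → ℝ} {p₀ : ι × κ}

lemma integral_prod_path_mul_prod_path (hX : iIndepFun X μ)
    (hident : ∀ p, IdentDistrib (X p) (X p₀) μ μ) (j j' : ι → κ) :
    ∫ ω, (∏ n, X (n, j n) ω) * ∏ n, X (n, j' n) ω ∂μ =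
      ∏ n, if j n = j' n then ∫ ω, X p₀ ω ^ 2 ∂μ
        else (∫ ω, X p₀ ω ∂μ) * ∫ ω, X p₀ ω ∂μ := by
  have := hX.isProbabilityMeasure
  calc ∫ ω, (∏ n, X (n, j n) ω) * ∏ n, X (n, j' n) ω ∂μ
      = ∫ ω, ∏ p, X p ω ^ pairVisits j j' p ∂μ := by
        congr 1 with ω
        exact prod_path_mul_prod_path (fun p => X p ω) j j'
    _ = ∏ p, ∫ ω, X p ω ^ pairVisits j j' p ∂μ :=
        hX.integral_fun_prod_comp (f := fun p x => x ^ pairVisits j j' p)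
          (fun p => (hident p).aemeasurable_fst) fun p => by fun_prop
    _ = ∏ p, ∫ ω, X p₀ ω ^ pairVisits j j' p ∂μ :=
        prod_congr rfl fun p _ => ((hident p).comp (measurable_id.pow_const _)).integral_eq
    _ = _ := by
        rw [prod_comp_pairVisits (fun c => ∫ ω, X p₀ ω ^ c ∂μ) (by simp)]
        simp

lemma integrable_prod_path_mul_prod_path (hX : iIndepFun X μ)
    (hident : ∀ p, IdentDistrib (X p) (X p₀) μ μ) (hint : Integrable (X p₀) μ)
    (hint_sq : Integrable (fun ω => X p₀ ω ^ 2) μ) (j j' : ι → κ) :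
    Integrable (fun ω => (∏ n, X (n, j n) ω) * ∏ n, X (n, j' n) ω) μ := by
  have := hX.isProbabilityMeasure
  have hpow : ∀ p, Integrable (fun ω => X p ω ^ pairVisits j j' p) μ := by
    intro p
    refine ((hident p).comp (measurable_id.pow_const (pairVisits j j' p))).integrable_iff.2 ?_
    unfold pairVisits
    split_ifs <;> simp [Function.comp_def, hint, hint_sq]
  simp_rw [fun ω => prod_path_mul_prod_path (fun p => X p ω) j j']
  exact (hX.comp (fun p x => x ^ pairVisits j j' p) fun p => by fun_prop).integrable_finsetProd
      hpow univ

lemma integral_sum_sum_prod_path_mul_prod_path [DecidableEq ι] (hX : iIndepFun X μ)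
    (hident : ∀ p, IdentDistrib (X p) (X p₀) μ μ) (hint : Integrable (X p₀) μ)
    (hint_sq : Integrable (fun ω => X p₀ ω ^ 2) μ) :
    ∫ ω, ∑ j : ι → κ, ∑ j' : ι → κ, (∏ n, X (n, j n) ω) * ∏ n, X (n, j' n) ω ∂μ =
      (Fintype.card κ * (∫ ω, X p₀ ω ^ 2 ∂μ +
        (Fintype.card κ - 1) * ((∫ ω, X p₀ ω ∂μ) * ∫ ω, X p₀ ω ∂μ))) ^ Fintype.card ι := by
  have hint_path := integrable_prod_path_mul_prod_path hX hident hint hint_sq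
  rw [integral_finsetSum _ fun j _ => integrable_finsetSum _ fun j' _ => hint_path j j']
  simp only [integral_finsetSum _ fun j' _ => hint_path _ j',
    integral_prod_path_mul_prod_path hX hident]
  rw [sum_sum_prod_eq_pow (fun k k' => if k = k' then _ else _), sum_sum_ite_eq]

end Independence

theorem rmc_scalar_variance_general
    {Ω : Type*} [MeasurableSpace Ω] (μ : Measure Ω) [IsProbabilityMeasure μ]
    {N K : ℕ} [NeZero N] [NeZero K]
    (A : Fin N → Fin K → Ω → ℝ)
    (hmeas : ∀ n k, Measurable (A n k))
    (hindep : iIndepFun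
      (fun (p : Fin N × Fin K) ω => A p.1 p.2 ω) μ)
    (hident : ∀ p p' : Fin N × Fin K,
      μ.map (fun ω => A p.1 p.2 ω) = μ.map (fun ω => A p'.1 p'.2 ω))
    (q lq l2q : ℝ)
    (hintq : Integrable (fun ω => |A 0 0 ω| ^ q) μ)
    (hint2q : Integrable (fun ω => |A 0 0 ω| ^ (2 * q)) μ)
    (hlq : Real.exp lq = ∫ ω, |A 0 0 ω| ^ q ∂μ)
    (hl2q : Real.exp l2q = ∫ ω, |A 0 0 ω| ^ (2 * q) ∂μ)
    (γ : ℝ) (hγ : γ = Real.exp (l2q - 2 * lq) - 1)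
    (DS : ℝ)
    (hDS : DS = (1 / (K : ℝ) ^ (2 * N)) *
      ∫ ω, ∑ j : Fin N → Fin K, ∑ j' : Fin N → Fin K,
        |∏ n : Fin N, A n (j n) ω| ^ q * |∏ n : Fin N, A n (j' n) ω| ^ q ∂μ) :
    DS = (1 / (K : ℝ) ^ N) *
        (Real.exp l2q + ((K : ℝ) - 1) * Real.exp (2 * lq)) ^ N ∧
    DS - Real.exp (2 * N * lq) =
      (1 / (K : ℝ) ^ N) * (Real.exp (2 * lq) * ((K : ℝ) + γ)) ^ N -
        Real.exp (2 * N * lq) ∧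
    (DS - Real.exp (2 * N * lq)) / Real.exp (2 * N * lq) =
      (1 + γ / (K : ℝ)) ^ N - 1 ∧
    Tendsto (fun K' : ℕ => (K' : ℝ) * ((1 + γ / (K' : ℝ)) ^ N - 1)) atTop
      (nhds (N * γ)) := by
  have hK : (K : ℝ) ≠ 0 := NeZero.ne _
  set X : Fin N × Fin K → Ω → ℝ := fun p ω => |A p.1 p.2 ω| ^ q
  have hX : iIndepFun X μ := hindep.comp (fun _ x => |x| ^ q) fun _ => by fun_prop
  have hXident : ∀ p, IdentDistrib (X p) (X (0, 0)) μ μ := fun p =>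
    (IdentDistrib.mk (hmeas p.1 p.2).aemeasurable (hmeas 0 0).aemeasurable
      (hident p (0, 0))).comp (by fun_prop : Measurable fun x : ℝ => |x| ^ q)
  have hsq : (fun ω => X (0, 0) ω ^ 2) = fun ω => |A 0 0 ω| ^ (2 * q) := by
    funext ω
    rw [mul_comm, ← Real.rpow_mul_natCast (abs_nonneg _)]
    norm_num
  have hpath : ∀ (j : Fin N → Fin K) ω, |∏ n, A n (j n) ω| ^ q = ∏ n, X (n, j n) ω := by
    intro j ω
    rw [abs_prod, Real.finsetProd_rpow _ _ fun _ _ => abs_nonneg _]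
  have hmoment := integral_sum_sum_prod_path_mul_prod_path hX hXident hintq (hsq ▸ hint2q)
  rw [hsq, ← hl2q, show ∫ ω, X (0, 0) ω ∂μ = Real.exp lq from hlq.symm, ← Real.exp_add,
    ← two_mul, Fintype.card_fin, Fintype.card_fin] at hmoment
  have hfactor : Real.exp l2q + ((K : ℝ) - 1) * Real.exp (2 * lq) =
      Real.exp (2 * lq) * ((K : ℝ) + γ) := by
    rw [hγ, Real.exp_sub]
    field_simp
    ring
  have hmain : DS = (1 / (K : ℝ) ^ N) *
      (Real.exp l2q + ((K : ℝ) - 1) * Real.exp (2 * lq)) ^ N := by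
    simp only [hDS, hpath, hmoment]
    rw [mul_pow, two_mul, pow_add]
    field_simp
  have hrel : DS = Real.exp (2 * N * lq) * (1 + γ / (K : ℝ)) ^ N := by
    rw [hmain, hfactor, mul_pow, ← Real.exp_nat_mul, one_add_div hK, div_pow]
    ring_nf
  refine ⟨hmain, by rw [hmain, hfactor], by rw [hrel]; field_simp,
    tendsto_natCast_mul_one_add_div_pow_sub_one N γ⟩

/-- In the scalar case `d = 1`, where `E|X_N|^q = e^{Nℓ(q)}` exactly, the
second moment of the RMC estimator (given by the double path-sum formula) evaluates in closed
form: `E'(Z_N²) = K^{-N}(e^{ℓ(2q)} + (K-1)e^{2ℓ(q)})^N`; hence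
`var Z_N = K^{-N}(e^{2ℓ(q)}(K + γ_q))^N − e^{2Nℓ(q)}` with `γ_q = e^{ℓ(2q)-2ℓ(q)} − 1`,
the relative variance is `(1 + γ_q/K)^N − 1`, which is asymptotic to `Nγ_q/K` as `K → ∞`
with `N` fixed. -/
theorem rmc_scalar_variance
    {Ω : Type*} [MeasurableSpace Ω] (μ : Measure Ω) [IsProbabilityMeasure μ]
    {N K : ℕ} [NeZero N] [NeZero K]
    (A : Fin N → Fin K → Ω → ℝ)
    (hmeas : ∀ n k, Measurable (A n k))
    (hne : ∀ n k ω, A n k ω ≠ 0)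
    (hindep : iIndepFun
      (fun (p : Fin N × Fin K) ω => A p.1 p.2 ω) μ)
    (hident : ∀ p p' : Fin N × Fin K,
      μ.map (fun ω => A p.1 p.2 ω) = μ.map (fun ω => A p'.1 p'.2 ω))
    (q lq l2q : ℝ)
    (hintq : Integrable (fun ω => |A 0 0 ω| ^ q) μ)
    (hint2q : Integrable (fun ω => |A 0 0 ω| ^ (2 * q)) μ)
    (hlq : Real.exp lq = ∫ ω, |A 0 0 ω| ^ q ∂μ)
    (hl2q : Real.exp l2q = ∫ ω, |A 0 0 ω| ^ (2 * q) ∂μ)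
    (γ : ℝ) (hγ : γ = Real.exp (l2q - 2 * lq) - 1)
    (DS : ℝ)
    (hDS : DS = (1 / (K : ℝ) ^ (2 * N)) *
      ∫ ω, ∑ j : Fin N → Fin K, ∑ j' : Fin N → Fin K,
        |∏ n : Fin N, A n (j n) ω| ^ q * |∏ n : Fin N, A n (j' n) ω| ^ q ∂μ) :
    DS = (1 / (K : ℝ) ^ N) *
        (Real.exp l2q + ((K : ℝ) - 1) * Real.exp (2 * lq)) ^ N ∧
    DS - Real.exp (2 * N * lq) =
      (1 / (K : ℝ) ^ N) * (Real.exp (2 * lq) * ((K : ℝ) + γ)) ^ N -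
        Real.exp (2 * N * lq) ∧
    (DS - Real.exp (2 * N * lq)) / Real.exp (2 * N * lq) =
      (1 + γ / (K : ℝ)) ^ N - 1 ∧
    Tendsto (fun K' : ℕ => (K' : ℝ) * ((1 + γ / (K' : ℝ)) ^ N - 1)) atTop
      (nhds (N * γ)) :=
  rmc_scalar_variance_general μ A hmeas hindep hident q lq l2q hintq hint2q hlq hl2q γ hγ DS hDS
end
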